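/- Fix a prime q, an integer d ≥ 2, t = ⌈2·log_q d + 2⌉, d distinct monic irreducible polynomials p_1, …, p_d of degree t over F = F_q, and a positive integer n with n ≥ 3dt. Let (B, β) be a good pair, T = T(B) = (Ā, D̄), and L = L_B(β). Then the set Ȳ_T(L) := { Ā + g·D̄ : g ∈ L } ∩ P_{<n+dt} has size exactly q^{dt}, where P_{<k} denotes the set of polynomials in F[x] of degree < k. -/

import Mathlib

open Finset Polynomial

/-- The value at `1/q` of a polynomial over `ZMod q`, with coefficients lifted to
`{0, 1, …, q−1} ⊆ ℝ`. -/
noncomputable def pev (q : ℕ) (g : Polynomial (ZMod q)) : ℝ :=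
  ∑ j ∈ Finset.range (g.natDegree + 1), ((g.coeff j).val : ℝ) / (q : ℝ) ^ j

/-- `r_p(f)`: writing `f = f₀ + f₁ p + f₂ p² + ⋯` in base `p` (each `fᵢ` of degree `< t`,
obtained as `(f /ₘ p^i) %ₘ p`), the real number
`(f₀(1/q) + f₁(1/q) q^(−t) + f₂(1/q) q^(−2t) + ⋯)/q`. -/
noncomputable def rp (q t : ℕ) (p f : Polynomial (ZMod q)) : ℝ :=
  (∑ i ∈ Finset.range (f.natDegree + 1), pev q ((f /ₘ p ^ i) %ₘ p) / (q : ℝ) ^ (i * t)) / q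

/-- The map `r : F[x] → [0,1)^d`, `r(f) = (r_{p 1}(f), …, r_{p d}(f))`. -/
noncomputable def rmap (q t d : ℕ) (p : Fin d → Polynomial (ZMod q))
    (f : Polynomial (ZMod q)) : Fin d → ℝ :=
  fun i => rp q t (p i) f

/-- The canonical box `∏ i, [a i / q^(t * k i), (a i + 1) / q^(t * k i))`. -/
def canonicalBox (q t d : ℕ) (k a : Fin d → ℕ) : Set (Fin d → ℝ) :=
  Set.univ.pi fun i =>
    Set.Ico ((a i : ℝ) / (q : ℝ) ^ (t * k i)) (((a i : ℝ) + 1) / (q : ℝ) ^ (t * k i))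

/-- A basic box in base `q` in `[0,1]^d` of volume `q^(-n)`. -/
def IsBasicBox (q d n : ℕ) (β : Set (Fin d → ℝ)) : Prop :=
  ∃ k a : Fin d → ℕ, (∀ i, a i + 1 ≤ q ^ k i) ∧ (∑ i, k i) = n ∧
    β = Set.univ.pi fun i =>
      Set.Ico ((a i : ℝ) / (q : ℝ) ^ k i) (((a i : ℝ) + 1) / (q : ℝ) ^ k i)

/-- A canonical box with parameter `t`, as a set. -/
def IsCanonicalBox (q t d : ℕ) (B : Set (Fin d → ℝ)) : Prop :=
  ∃ k a : Fin d → ℕ, (∀ i, a i + 1 ≤ q ^ (t * k i)) ∧ B = canonicalBox q t d k a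

/-- `(B, β)` is a good pair: `β` is a basic box of volume `q^(-n)` and `B` is the
smallest canonical box containing `β`. -/
def IsGoodPair (q t d n : ℕ) (B β : Set (Fin d → ℝ)) : Prop :=
  IsBasicBox q d n β ∧ IsCanonicalBox q t d B ∧ β ⊆ B ∧
    ∀ B' : Set (Fin d → ℝ), IsCanonicalBox q t d B' → β ⊆ B' → B ⊆ B'

/-- The polynomial obtained from `f` by setting the coefficients of
`x^0, x^1, …, x^(c-1)` to zero. -/
noncomputable def eraseLow (q : ℕ) (c : ℕ) (f : Polynomial (ZMod q)) : Polynomial (ZMod q) :=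
  ∑ j ∈ f.support.filter (fun j => c ≤ j), Polynomial.monomial j (f.coeff j)

/-!
Write `β = ∏ᵢ [bᵢ/q^νᵢ, (bᵢ+1)/q^νᵢ)`. As `B` is the smallest canonical box containing `β`,
`νᵢ = t kᵢ + cᵢ` with `0 ≤ cᵢ < t`, so `Σ cᵢ = n - t Σ kᵢ`.

The base-`q` digits of `r_p(f)` are the coefficients of the base-`p` digits of `f`, `t` at a
time. For `f = A + g D` with `D = ∏ pᵢ^kᵢ = pᵢ^kᵢ Eᵢ`, the first `t kᵢ` digits of `r_{pᵢ}(f)` are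
those of `A`, and the next `cᵢ` are the first `cᵢ` coefficients of `(A /ₘ pᵢ^kᵢ + g Eᵢ) mod pᵢ`.
Since `Eᵢ` is invertible mod `pᵢ`, membership `g ∈ L` prescribes `cᵢ` coefficients of an
invertible affine image of `g mod pᵢ`, and by the Chinese remainder theorem exactly
`q^(dt - Σ cᵢ)` residues of `g` modulo `p₁ ⋯ p_d` qualify.

The truncations are harmless: `deg Ā < t Σ kᵢ = deg D̄` (because `n - 3dt < t Σ kᵢ`), so
`g ↦ Ā + g D̄` is injective and `deg (Ā + g D̄) < n + dt` iff `deg g < dt + Σ cᵢ`. Each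
admissible residue has `q^(Σ cᵢ)` such lifts, giving `q^(dt)` in total.
-/

namespace Set

variable {α β : Type*}

theorem BijOn.ncard_inter_preimage {f : α → β} {s : Set α} {t : Set β} (h : BijOn f s t)
    (u : Set β) : (s ∩ f ⁻¹' u).ncard = (t ∩ u).ncard := by
  rw [← (h.injOn.mono inter_subset_left).ncard_image, image_inter_preimage, h.image_eq]

theorem bijOn_of_ncard_le {f : α → β} {s : Set α} {t : Set β} (hf : MapsTo f s t)
    (hinj : InjOn f s) (hcard : t.ncard ≤ s.ncard) (ht : t.Finite) : BijOn f s t := by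
  refine ⟨hf, hinj, ?_⟩
  rw [← eq_of_subset_of_ncard_le hf.image_subset (by rwa [hinj.ncard_image]) ht]
  exact Subset.rfl

theorem ncard_univ_pi {ι : Type*} [Fintype ι] {κ : ι → Type*} (s : ∀ i, Set (κ i)) :
    (univ.pi s).ncard = ∏ i, (s i).ncard := by
  rw [← Nat.card_coe_set_eq, Nat.card_congr (Equiv.Set.univPi s), Nat.card_pi]
  simp only [Nat.card_coe_set_eq]

end Set

open Set

namespace Polynomial

theorem add_pow_mul_divByMonic_pow {R : Type*} [CommRing R] [Nontrivial R] {p : R[X]} (hp : p.Monic)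
    (f h : R[X]) {i k : ℕ} (hik : i ≤ k) :
    (f + p ^ k * h) /ₘ p ^ i = f /ₘ p ^ i + p ^ (k - i) * h := by
  refine (div_modByMonic_unique _ (f %ₘ p ^ i) (hp.pow i)
    ⟨?_, degree_modByMonic_lt f (hp.pow i)⟩).1
  rw [mul_add, ← mul_assoc, ← pow_add, Nat.add_sub_cancel' hik, ← add_assoc,
    modByMonic_add_div f (p ^ i)]

section Domain

variable {R : Type*} [CommRing R] [IsDomain R]

theorem eq_of_dvd_sub_of_degree_lt {P f g : R[X]} (h : P ∣ f - g) (hf : f.degree < P.degree)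
    (hg : g.degree < P.degree) : f = g :=
  sub_eq_zero.1 <| eq_zero_of_dvd_of_degree_lt h <|
    (degree_sub_le f g).trans_lt (max_lt hf hg)

theorem degree_add_mul_lt_iff {A D g : R[X]} {m N : ℕ} (hA : A.degree < m) (hD : D.degree = m)
    (hmN : m ≤ N) : (A + g * D).degree < N ↔ g.degree < ↑(N - m) := by
  rcases eq_or_ne g 0 with rfl | hg
  · simpa using hA.trans_le (by exact_mod_cast hmN)
  have hgD : (g * D).degree = ↑(g.natDegree + m) := by
    rw [degree_mul, hD, degree_eq_natDegree hg]
    rfl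
  rw [degree_add_eq_right_of_degree_lt (hgD ▸ hA.trans_le (by exact_mod_cast Nat.le_add_left _ _)),
    hgD, degree_eq_natDegree hg, Nat.cast_lt, Nat.cast_lt]
  omega

theorem ncard_setOf_add_mul_inter_degree_lt {A D : R[X]} {m N : ℕ} (hA : A.degree < m)
    (hD : D.degree = m) (hmN : m ≤ N) (S : Set R[X]) :
    ({u | ∃ g ∈ S, u = A + g * D} ∩ {u | u.degree < ↑N}).ncard
      = {g | g.degree < ↑(N - m) ∧ g ∈ S}.ncard := by
  have hD0 : D ≠ 0 := fun h => by simp [h] at hD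
  have himage : {u | ∃ g ∈ S, u = A + g * D} ∩ {u | u.degree < ↑N}
      = (fun g => A + g * D) '' {g | g.degree < ↑(N - m) ∧ g ∈ S} := by
    ext u
    simp only [Set.mem_inter_iff, Set.mem_ofPred_eq, Set.mem_image]
    constructor
    · rintro ⟨⟨g, hg, rfl⟩, hu⟩
      exact ⟨g, ⟨(degree_add_mul_lt_iff hA hD hmN).1 hu, hg⟩, rfl⟩
    · rintro ⟨g, ⟨hdeg, hg⟩, rfl⟩
      exact ⟨⟨g, hg, rfl⟩, (degree_add_mul_lt_iff hA hD hmN).2 hdeg⟩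
  rw [himage, Set.InjOn.ncard_image fun g _ g' _ h => mul_right_cancel₀ hD0 (add_left_cancel h)]

end Domain

section Semiring

variable {R : Type*} [Semiring R]

theorem setOf_degree_lt_eq_degreeLT (m : ℕ) : {f : R[X] | f.degree < m} = degreeLT R m :=
  Set.ext fun _ => mem_degreeLT.symm

theorem ncard_setOf_degree_lt (m : ℕ) : {f : R[X] | f.degree < m}.ncard = Nat.card R ^ m := by
  rw [setOf_degree_lt_eq_degreeLT, ← Nat.card_coe_set_eq, SetLike.coe_sort_coe,
    Nat.card_congr (degreeLTEquiv R m).toEquiv, Nat.card_fun, Nat.card_fin]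

theorem bijOn_coeff_fin (m : ℕ) :
    BijOn (fun (f : R[X]) (j : Fin m) => f.coeff j) {f | f.degree < ↑m} univ := by
  rw [setOf_degree_lt_eq_degreeLT]
  refine ⟨mapsTo_univ _ _, fun f hf g hg hfg => ?_, fun v _ => ?_⟩
  · simpa using (degreeLTEquiv R m).injective (a₁ := ⟨f, hf⟩) (a₂ := ⟨g, hg⟩) hfg
  · exact ⟨_, ((degreeLTEquiv R m).symm v).2, (degreeLTEquiv R m).apply_symm_apply v⟩

theorem ncard_setOf_degree_lt_coeff_eq {c m : ℕ} (hcm : c ≤ m) (τ : ℕ → R) :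
    {f : R[X] | f.degree < ↑m ∧ ∀ j < c, f.coeff j = τ j}.ncard = Nat.card R ^ (m - c) := by
  classical
  let V : Fin m → Set R := fun j => if (j : ℕ) < c then {τ j} else univ
  have hset : {f : R[X] | f.degree < ↑m ∧ ∀ j < c, f.coeff j = τ j}
      = {f : R[X] | f.degree < ↑m} ∩ (fun (f : R[X]) (j : Fin m) => f.coeff j) ⁻¹' univ.pi V := by
    ext f
    simp only [Set.mem_ofPred_eq, Set.mem_inter_iff, Set.mem_preimage, Set.mem_univ_pi, V]
    refine and_congr_right fun _ => ⟨fun h j => ?_, fun h j hj => ?_⟩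
    · split_ifs with hj
      exacts [h j hj, mem_univ _]
    · simpa [hj] using h ⟨j, hj.trans_le hcm⟩
  rw [hset, (bijOn_coeff_fin m).ncard_inter_preimage, univ_inter, ncard_univ_pi]
  simp only [V, apply_ite Set.ncard, ncard_singleton, ncard_univ]
  rw [Finset.prod_ite, Finset.prod_const_one, one_mul, Finset.prod_const]
  congr 1
  have := Finset.card_filter_add_card_filter_not (s := univ) fun j : Fin m => (j : ℕ) < c
  rw [Fin.card_filter_val_lt, card_univ, Fintype.card_fin] at this
  omega

theorem finite_setOf_degree_lt [Finite R] (m : ℕ) : {f : R[X] | f.degree < m}.Finite := by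
  have : Finite (degreeLT R m) := .of_equiv _ (degreeLTEquiv R m).toEquiv.symm
  rw [setOf_degree_lt_eq_degreeLT]
  exact Set.toFinite _

end Semiring

variable {K : Type*} [Field K]

theorem pairwise_isCoprime_of_irreducible {ι : Type*} {p : ι → K[X]}
    (hm : ∀ i, (p i).Monic) (hirr : ∀ i, Irreducible (p i)) (hinj : Function.Injective p) :
    Pairwise fun i j => IsCoprime (p i) (p j) := fun i j hij =>
  (hirr i).coprime_iff_not_dvd.2 fun hdvd => hij <| hinj <|
    eq_of_monic_of_associated (hm i) (hm j) ((hirr i).associated_of_dvd (hirr j) hdvd)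

variable [Finite K]

theorem bijOn_mul_add {P : K[X]} (hP : P.Monic) {M : ℕ} (hM : P.natDegree ≤ M) :
    BijOn (fun rh : K[X] × K[X] => rh.2 * P + rh.1)
      ({r | r.degree < ↑P.natDegree} ×ˢ {h | h.degree < ↑(M - P.natDegree)})
      {g | g.degree < M} := by
  have hPdeg : P.degree = P.natDegree := degree_eq_natDegree hP.ne_zero
  refine bijOn_of_ncard_le ?_ ?_ ?_ (finite_setOf_degree_lt M)
  · rintro ⟨r, h⟩ ⟨hr, hh : h.degree < _⟩
    refine (degree_add_le _ _).trans_lt (max_lt ?_ (hr.trans_le (by exact_mod_cast hM)))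
    rcases eq_or_ne h 0 with rfl | h0
    · simp
    rw [degree_eq_natDegree h0] at hh
    rw [hP.degree_mul, hPdeg, degree_eq_natDegree h0]
    have : h.natDegree < M - P.natDegree := by exact_mod_cast hh
    exact_mod_cast (by omega : h.natDegree + P.natDegree < M)
  · rintro ⟨r, h⟩ ⟨hr, -⟩ ⟨r', h'⟩ ⟨hr', -⟩ (e : h * P + r = h' * P + r')
    have h1 := div_modByMonic_unique (f := h * P + r) h r hP ⟨by ring, hPdeg ▸ hr⟩
    have h2 := div_modByMonic_unique (f := h * P + r) h' r' hP ⟨by rw [e]; ring, hPdeg ▸ hr'⟩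
    exact Prod.ext (h1.2.symm.trans h2.2) (h1.1.symm.trans h2.1)
  · rw [ncard_prod, ncard_setOf_degree_lt, ncard_setOf_degree_lt, ncard_setOf_degree_lt,
      ← pow_add, Nat.add_sub_cancel' hM]

theorem bijOn_add_mul_modByMonic {p E : K[X]} (hp : p.Monic) (hpE : IsCoprime p E) (a : K[X]) :
    BijOn (fun f => (a + f * E) %ₘ p) {f : K[X] | f.degree < ↑p.natDegree}
      {f : K[X] | f.degree < ↑p.natDegree} := by
  have hpdeg : p.degree = p.natDegree := degree_eq_natDegree hp.ne_zero
  refine bijOn_of_ncard_le (fun f _ => hpdeg ▸ degree_modByMonic_lt _ hp)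
    (fun f hf g hg hfg => ?_) le_rfl (finite_setOf_degree_lt _)
  have hdvd : p ∣ (f - g) * E := by
    rw [← modByMonic_eq_zero_iff_dvd hp, sub_mul, ← add_sub_add_left_eq_sub _ _ a,
      sub_modByMonic, hfg, sub_self]
  exact eq_of_dvd_sub_of_degree_lt (hpE.dvd_of_dvd_mul_right hdvd) (hpdeg ▸ hf) (hpdeg ▸ hg)

variable {d t : ℕ} {p : Fin d → K[X]}

theorem bijOn_modByMonic_pi (hm : ∀ i, (p i).Monic) (hdeg : ∀ i, (p i).natDegree = t)
    (hcop : Pairwise fun i j => IsCoprime (p i) (p j)) :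
    BijOn (fun f i => f %ₘ p i) {f : K[X] | f.degree < ↑(d * t)}
      (univ.pi fun _ => {f : K[X] | f.degree < ↑t}) := by
  have hpdeg : ∀ i, (p i).degree = t := fun i => by
    rw [degree_eq_natDegree (hm i).ne_zero, hdeg]
  have hPdeg : (∏ i, p i).degree = ↑(d * t) := by
    rw [degree_prod, Finset.sum_congr rfl fun i _ => hpdeg i]
    simp
  refine bijOn_of_ncard_le (fun f _ i _ => hpdeg i ▸ degree_modByMonic_lt f (hm i))
    (fun f hf g hg hfg => ?_) ?_ (Finite.pi fun _ => finite_setOf_degree_lt t)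
  · refine eq_of_dvd_sub_of_degree_lt (Finset.prod_dvd_of_coprime
      (fun i _ j _ hij => hcop hij) fun i _ => ?_) (hPdeg ▸ hf) (hPdeg ▸ hg)
    rw [← modByMonic_eq_zero_iff_dvd (hm i), sub_modByMonic, congrFun hfg i, sub_self]
  · rw [ncard_univ_pi, ncard_setOf_degree_lt, Finset.prod_const, ncard_setOf_degree_lt, card_univ,
      Fintype.card_fin, ← pow_mul, mul_comm]

theorem ncard_setOf_degree_lt_modByMonic_mem (hm : ∀ i, (p i).Monic)
    (hdeg : ∀ i, (p i).natDegree = t) (hcop : Pairwise fun i j => IsCoprime (p i) (p j))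
    {M : ℕ} (hM : d * t ≤ M) (S : Fin d → Set K[X]) :
    {g : K[X] | g.degree < ↑M ∧ ∀ i, g %ₘ p i ∈ S i}.ncard
      = (∏ i, ({f : K[X] | f.degree < ↑t} ∩ S i).ncard) * Nat.card K ^ (M - d * t) := by
  have hP : (∏ i, p i).Monic := monic_prod_of_monic _ _ fun i _ => hm i
  have hPdeg : (∏ i, p i).natDegree = d * t := by
    simp [natDegree_prod_of_monic _ _ fun i _ => hm i, hdeg]
  have hsplit := bijOn_mul_add hP (hPdeg ▸ hM)
  rw [hPdeg] at hsplit
  have hmod : ∀ r h i, (h * ∏ i, p i + r) %ₘ p i = r %ₘ p i := fun r h i =>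
    modByMonic_eq_of_dvd_sub (hm i) <| by
      simpa using dvd_mul_of_dvd_right (Finset.dvd_prod_of_mem p (mem_univ i)) h
  calc _ = ({g : K[X] | g.degree < ↑M} ∩ {g | ∀ i, g %ₘ p i ∈ S i}).ncard := rfl
    _ = (({f : K[X] | f.degree < ↑(d * t)} ∩ (fun f i => f %ₘ p i) ⁻¹' univ.pi S) ×ˢ
          {f : K[X] | f.degree < ↑(M - d * t)}).ncard := by
      rw [← hsplit.ncard_inter_preimage]
      congr 1
      ext ⟨r, h⟩
      simp only [Set.mem_inter_iff, Set.mem_prod, Set.mem_preimage, Set.mem_univ_pi,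
        Set.mem_ofPred_eq, hmod]
      tauto
    _ = _ := by
      rw [ncard_prod, (bijOn_modByMonic_pi hm hdeg hcop).ncard_inter_preimage,
        ← pi_inter_distrib, ncard_univ_pi, ncard_setOf_degree_lt]

end Polynomial


section EraseLow

variable {q : ℕ}

theorem coeff_eraseLow (c : ℕ) (f : (ZMod q)[X]) (j : ℕ) :
    (eraseLow q c f).coeff j = if c ≤ j then f.coeff j else 0 := by
  simp only [eraseLow, finsetSum_coeff, coeff_monomial, Finset.sum_ite_eq', Finset.mem_filter,
    mem_support_iff]
  split_ifs <;> tauto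

theorem degree_eraseLow_le (c : ℕ) (f : (ZMod q)[X]) : (eraseLow q c f).degree ≤ f.degree :=
  (degree_le_iff_coeff_zero _ _).2 fun m hm => by
    rw [coeff_eraseLow, coeff_eq_zero_of_degree_lt hm, ite_self]

theorem Polynomial.Monic.degree_eraseLow [Fact q.Prime] {c : ℕ} {f : (ZMod q)[X]} (hf : f.Monic)
    (hc : c ≤ f.natDegree) : (eraseLow q c f).degree = f.natDegree :=
  degree_eq_of_le_of_coeff_ne_zero ((degree_eraseLow_le c f).trans degree_le_natDegree)
    (by rw [coeff_eraseLow, if_pos hc, hf.coeff_natDegree]; exact one_ne_zero)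

end EraseLow

def adicIco (q N b : ℕ) : Set ℝ := Ico ((b : ℝ) / (q : ℝ) ^ N) (((b : ℝ) + 1) / (q : ℝ) ^ N)

section AdicIco

variable {q : ℕ}

theorem adicIco_eq_Ico_div_pow (hq : q ≠ 0) {m N : ℕ} (hmN : m ≤ N) (a : ℕ) :
    adicIco q m a = Ico (((a * q ^ (N - m) : ℕ) : ℝ) / (q : ℝ) ^ N)
      (((((a + 1) * q ^ (N - m) : ℕ)) : ℝ) / (q : ℝ) ^ N) := by
  have hpow : (q : ℝ) ^ N = q ^ m * q ^ (N - m) := by rw [← pow_add, Nat.add_sub_cancel' hmN]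
  rw [adicIco, hpow]
  push_cast
  rw [mul_div_mul_right _ _ (by positivity), mul_div_mul_right _ _ (by positivity)]

theorem left_mem_adicIco (hq : q ≠ 0) (N b : ℕ) : (b : ℝ) / (q : ℝ) ^ N ∈ adicIco q N b :=
  Set.left_mem_Ico.2 <| div_lt_div_of_pos_right (lt_add_one _) (by positivity)

theorem natCast_div_pow_mem_adicIco_iff (hq : q ≠ 0) {N M : ℕ} (hNM : N ≤ M) (X b : ℕ) :
    (X : ℝ) / (q : ℝ) ^ M ∈ adicIco q N b ↔ X / q ^ (M - N) = b := by
  have hQ : 0 < q ^ (M - N) := by positivity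
  rw [adicIco_eq_Ico_div_pow hq hNM, Set.mem_Ico, div_le_div_iff_of_pos_right (by positivity),
    div_lt_div_iff_of_pos_right (by positivity), Nat.cast_le, Nat.cast_lt, Nat.div_eq_iff hQ,
    add_one_mul]
  omega

theorem adicIco_subset_adicIco_iff (hq : 1 < q) {N m a b : ℕ} :
    adicIco q N b ⊆ adicIco q m a ↔ m ≤ N ∧ b / q ^ (N - m) = a := by
  have hq0 : q ≠ 0 := by omega
  constructor
  · intro h
    have hmN : m ≤ N := by
      by_contra! hNm
      rw [adicIco_eq_Ico_div_pow hq0 hNm.le, adicIco, Set.Ico_subset_Ico_iff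
        (div_lt_div_of_pos_right (by gcongr; lia) (by positivity)),
        div_le_div_iff_of_pos_right (by positivity), div_le_div_iff_of_pos_right (by positivity)]
        at h
      have hQ : q ≤ q ^ (m - N) := Nat.le_self_pow (by omega) q
      obtain ⟨h1, h2⟩ := h
      have h1' : a ≤ b * q ^ (m - N) := by exact_mod_cast h1
      have h2' : (b + 1) * q ^ (m - N) ≤ a + 1 := by exact_mod_cast h2
      nlinarith
    exact ⟨hmN, (natCast_div_pow_mem_adicIco_iff hq0 hmN b a).1 (h (left_mem_adicIco hq0 N b))⟩
  · rintro ⟨hmN, rfl⟩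
    rw [adicIco_eq_Ico_div_pow hq0 hmN, adicIco]
    have hQ : 0 < q ^ (N - m) := by positivity
    refine Set.Ico_subset_Ico (div_le_div_of_nonneg_right ?_ (by positivity))
      (div_le_div_of_nonneg_right ?_ (by positivity))
    · exact_mod_cast Nat.div_mul_le_self b _
    · rw [add_one_mul]
      exact_mod_cast Nat.lt_div_mul_add hQ

end AdicIco

def digitValue (q : ℕ) : ℕ → (ℕ → ℕ) → ℕ
  | 0, _ => 0
  | c + 1, w => q * digitValue q c w + w c

section DigitValue

variable {q : ℕ}

theorem digitValue_add (B c : ℕ) (w : ℕ → ℕ) :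
    digitValue q (B + c) w = digitValue q B w * q ^ c + digitValue q c (fun j => w (B + j)) := by
  induction c with
  | zero => simp [digitValue]
  | succ c ih =>
    rw [← add_assoc, digitValue, ih, digitValue, pow_succ]
    ring

theorem digitValue_congr {c : ℕ} {w w' : ℕ → ℕ} (h : ∀ j < c, w j = w' j) :
    digitValue q c w = digitValue q c w' := by
  induction c with
  | zero => rfl
  | succ c ih => rw [digitValue, digitValue, ih fun j hj => h j (by omega), h c (by omega)]

theorem digitValue_zeros (c : ℕ) : digitValue q c (fun _ => 0) = 0 := by
  induction c with
  | zero => rfl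
  | succ c ih => simp [digitValue, ih]

theorem digitValue_lt {c : ℕ} {w : ℕ → ℕ} (hw : ∀ j < c, w j < q) : digitValue q c w < q ^ c := by
  induction c with
  | zero => simp [digitValue]
  | succ c ih =>
    have h1 := ih fun j hj => hw j (by omega)
    have h2 := hw c (by omega)
    rw [digitValue, pow_succ]
    nlinarith

theorem digitValue_div_pow {w : ℕ → ℕ} (hw : ∀ j, w j < q) {N M : ℕ} (hNM : N ≤ M) :
    digitValue q M w / q ^ (M - N) = digitValue q N w := by
  obtain ⟨c, rfl⟩ := Nat.exists_eq_add_of_le hNM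
  have hlt := digitValue_lt (q := q) (c := c) fun j _ => hw (N + j)
  rw [digitValue_add, Nat.add_sub_cancel_left, mul_comm, Nat.mul_add_div (by omega),
    Nat.div_eq_of_lt hlt, add_zero]

theorem digitValue_eq_iff {c s : ℕ} {w : ℕ → ℕ} (hw : ∀ j < c, w j < q) (hs : s < q ^ c) :
    digitValue q c w = s ↔ ∀ j < c, w j = s / q ^ (c - 1 - j) % q := by
  induction c generalizing s with
  | zero =>
    simp only [pow_zero, Nat.lt_one_iff] at hs
    simp [digitValue, hs]
  | succ c ih =>
    have hq : 0 < q := by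
      rcases Nat.eq_zero_or_pos q with rfl | h
      · simp at hs
      · exact h
    have hwc := hw c (by omega)
    have hsplit : digitValue q (c + 1) w = s ↔ digitValue q c w = s / q ∧ w c = s % q := by
      rw [digitValue]
      constructor
      · rintro rfl
        rw [Nat.mul_add_div hq, Nat.div_eq_of_lt hwc, Nat.mul_add_mod, Nat.mod_eq_of_lt hwc]
        simp
      · rintro ⟨h1, h2⟩
        rw [h1, h2, Nat.div_add_mod]
    rw [hsplit, ih (fun j hj => hw j (by omega))
      (Nat.div_lt_of_lt_mul (by rwa [← pow_succ'])), Nat.forall_lt_succ_right]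
    refine and_congr (forall₂_congr fun j hj => ?_) (by simp)
    rw [Nat.div_div_eq_div_mul, ← pow_succ', show c - 1 - j + 1 = c + 1 - 1 - j by omega]

theorem ncard_setOf_degree_lt_digitValue_coeff_eq [Fact q.Prime] {c t s : ℕ} (hct : c ≤ t)
    (hs : s < q ^ c) :
    {f : (ZMod q)[X] | f.degree < ↑t ∧ digitValue q c (fun j => (f.coeff j).val) = s}.ncard
      = q ^ (t - c) := by
  have hq : 0 < q := (Fact.out : q.Prime).pos
  have hset : {f : (ZMod q)[X] | f.degree < ↑t ∧ digitValue q c (fun j => (f.coeff j).val) = s}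
      = {f | f.degree < ↑t ∧ ∀ j < c, f.coeff j = ((s / q ^ (c - 1 - j) % q : ℕ) : ZMod q)} := by
    ext f
    simp only [Set.mem_ofPred_eq, digitValue_eq_iff (fun j _ => ZMod.val_lt _) hs]
    refine and_congr_right fun _ => forall₂_congr fun j _ => ?_
    rw [← (ZMod.val_injective q).eq_iff, ZMod.val_natCast_of_lt (Nat.mod_lt _ hq)]
  rw [hset, ncard_setOf_degree_lt_coeff_eq hct, Nat.card_zmod]

end DigitValue

/-- The base-`q` digit of `rp q t p f` of weight `q^-(j+1)`. -/
noncomputable def rpDigit {q : ℕ} (t : ℕ) (p f : (ZMod q)[X]) (j : ℕ) : ℕ :=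
  (((f /ₘ p ^ (j / t)) %ₘ p).coeff (j % t)).val

section Digits

variable {q : ℕ} [Fact q.Prime] {t : ℕ} {p : (ZMod q)[X]}

theorem rpDigit_lt (f : (ZMod q)[X]) (j : ℕ) : rpDigit t p f j < q :=
  ZMod.val_lt _

theorem sum_div_pow_succ_eq_digitValue (N : ℕ) (w : ℕ → ℕ) :
    ∑ j ∈ range N, (w j : ℝ) / (q : ℝ) ^ (j + 1) = digitValue q N w / (q : ℝ) ^ N := by
  have hq : (q : ℝ) ≠ 0 := by exact_mod_cast (Fact.out : q.Prime).ne_zero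
  induction N with
  | zero => simp [digitValue]
  | succ N ih =>
    rw [sum_range_succ, ih, digitValue]
    push_cast
    field_simp
    ring

theorem pev_div_eq_digitValue {g : (ZMod q)[X]} (hg : g.natDegree < t) :
    pev q g / q = digitValue q t (fun j => (g.coeff j).val) / (q : ℝ) ^ t := by
  rw [← sum_div_pow_succ_eq_digitValue, pev, sum_div]
  refine sum_subset (range_subset_range.2 hg) (fun j _ hj => ?_) |>.trans
    (sum_congr rfl fun j _ => by rw [div_div, pow_succ])
  rw [coeff_eq_zero_of_natDegree_lt (by simpa using hj), ZMod.val_zero, Nat.cast_zero, zero_div,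
    zero_div]

theorem rpDigit_eq_zero_of_le (hp : p.Monic) (hpt : p.natDegree = t) (ht : 0 < t)
    {f : (ZMod q)[X]} {j : ℕ} (hj : (f.natDegree + 1) * t ≤ j) : rpDigit t p f j = 0 := by
  have hfj : f.natDegree < j / t * t := by
    have := Nat.le_div_iff_mul_le ht |>.2 hj
    nlinarith
  rw [rpDigit, (divByMonic_eq_zero_iff (hp.pow _)).2, zero_modByMonic, coeff_zero, ZMod.val_zero]
  rw [degree_eq_natDegree (hp.pow _).ne_zero, natDegree_pow, hpt]
  exact degree_le_natDegree.trans_lt (by exact_mod_cast hfj)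

theorem rp_eq_digitValue_div (hp : p.Monic) (hpt : p.natDegree = t) (ht : 0 < t)
    (f : (ZMod q)[X]) :
    rp q t p f = digitValue q ((f.natDegree + 1) * t) (rpDigit t p f)
      / (q : ℝ) ^ ((f.natDegree + 1) * t) := by
  have hblock : ∀ i, digitValue q t (fun m => rpDigit t p f (i * t + m))
      = digitValue q t (fun m => (((f /ₘ p ^ i) %ₘ p).coeff m).val) := fun i =>
    digitValue_congr fun m hm => by
      rw [rpDigit, mul_comm, Nat.mul_add_div ht, Nat.div_eq_of_lt hm, add_zero,
        Nat.mul_add_mod_self_left, Nat.mod_eq_of_lt hm]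
  have hmod : ∀ i, ((f /ₘ p ^ i) %ₘ p).natDegree < t := fun i => by
    have := natDegree_modByMonic_lt (f /ₘ p ^ i) hp (by rintro rfl; simp at hpt; omega)
    omega
  suffices ∀ B, (∑ i ∈ range B, pev q ((f /ₘ p ^ i) %ₘ p) / (q : ℝ) ^ (i * t)) / q
      = digitValue q (B * t) (rpDigit t p f) / (q : ℝ) ^ (B * t) from this _
  intro B
  induction B with
  | zero => simp [digitValue]
  | succ B ih =>
    rw [sum_range_succ, add_div, ih, div_right_comm, pev_div_eq_digitValue (hmod B), add_one_mul,
      digitValue_add, hblock]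
    push_cast
    have hq : (q : ℝ) ≠ 0 := by exact_mod_cast (Fact.out : q.Prime).ne_zero
    rw [pow_add]
    field_simp

theorem rp_mem_adicIco_iff (hp : p.Monic) (hpt : p.natDegree = t) (ht : 0 < t)
    (f : (ZMod q)[X]) (N b : ℕ) :
    rp q t p f ∈ adicIco q N b ↔ digitValue q N (rpDigit t p f) = b := by
  have hq : q ≠ 0 := (Fact.out : q.Prime).ne_zero
  set B := (f.natDegree + 1) * t
  have hext : digitValue q (B + N) (rpDigit t p f) = digitValue q B (rpDigit t p f) * q ^ N := by
    rw [digitValue_add, digitValue_congr (w := fun j => rpDigit t p f (B + j)) (w' := fun _ => 0)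
      fun j _ => rpDigit_eq_zero_of_le hp hpt ht (by omega), digitValue_zeros, add_zero]
  have hrp : rp q t p f = digitValue q (B + N) (rpDigit t p f) / (q : ℝ) ^ (B + N) := by
    rw [rp_eq_digitValue_div hp hpt ht, hext, pow_add, Nat.cast_mul, Nat.cast_pow,
      mul_div_mul_right _ _ (by positivity)]
  rw [hrp, natCast_div_pow_mem_adicIco_iff hq (by omega),
    digitValue_div_pow (rpDigit_lt f) (by omega)]

theorem rpDigit_add_pow_mul_of_lt (hp : p.Monic) (f h : (ZMod q)[X]) {k j : ℕ}
    (hj : j < t * k) : rpDigit t p (f + p ^ k * h) j = rpDigit t p f j := by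
  have ht : 0 < t := Nat.pos_of_ne_zero (by rintro rfl; simp at hj)
  have hjk : j / t < k := Nat.div_lt_of_lt_mul hj
  rw [rpDigit, rpDigit, add_pow_mul_divByMonic_pow hp f h hjk.le, add_modByMonic,
    (modByMonic_eq_zero_iff_dvd hp).2 (dvd_mul_of_dvd_left (dvd_pow_self p (by omega)) h),
    add_zero]

theorem rpDigit_add_pow_mul_block (hp : p.Monic) (ht : 0 < t) (f h : (ZMod q)[X]) (k : ℕ)
    {m : ℕ} (hm : m < t) :
    rpDigit t p (f + p ^ k * h) (t * k + m) = (((f /ₘ p ^ k + h) %ₘ p).coeff m).val := by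
  rw [rpDigit, Nat.mul_add_div ht, Nat.div_eq_of_lt hm, add_zero, Nat.mul_add_mod_self_left,
    Nat.mod_eq_of_lt hm, add_pow_mul_divByMonic_pow hp f h le_rfl, Nat.sub_self, pow_zero,
    one_mul]

theorem rp_add_pow_mul_mem_adicIco_iff (hp : p.Monic) (hpt : p.natDegree = t) (ht : 0 < t)
    {f : (ZMod q)[X]} {k a : ℕ} (hf : rp q t p f ∈ adicIco q (t * k) a) {c : ℕ} (hc : c ≤ t)
    (h : (ZMod q)[X]) (b : ℕ) :
    rp q t p (f + p ^ k * h) ∈ adicIco q (t * k + c) (a * q ^ c + b)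
      ↔ digitValue q c (fun m => (((f /ₘ p ^ k + h) %ₘ p).coeff m).val) = b := by
  rw [rp_mem_adicIco_iff hp hpt ht] at hf ⊢
  rw [digitValue_add, digitValue_congr fun j hj => rpDigit_add_pow_mul_of_lt hp f h hj, hf,
    digitValue_congr fun m hm => rpDigit_add_pow_mul_block hp ht f h k (hm.trans_le hc),
    add_right_inj]

end Digits

section GoodPair

variable {q t d n : ℕ} {k a : Fin d → ℕ} {β : Set (Fin d → ℝ)}

theorem univ_pi_adicIco_subset_iff (hq : q ≠ 0) {N m b : Fin d → ℕ} :
    univ.pi (fun i => adicIco q (N i) (b i)) ⊆ univ.pi (fun i => adicIco q (m i) (a i))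
      ↔ ∀ i, adicIco q (N i) (b i) ⊆ adicIco q (m i) (a i) :=
  univ_pi_subset_univ_pi_iff.trans <| or_iff_left fun ⟨i, hi⟩ =>
    (hi ▸ left_mem_adicIco hq (N i) (b i) : _ ∈ (∅ : Set ℝ))

/-- Otherwise refining `B` in coordinate `i` by one more block of `t` digits gives a canonical
box that contains the small box but not `B`. -/
theorem lt_mul_add_one_of_minimal (hq : 1 < q) (ht : 0 < t) (ha : ∀ i, a i + 1 ≤ q ^ (t * k i))
    {ν b : Fin d → ℕ} (hb : ∀ i, b i < q ^ ν i)
    (hsub : ∀ i, adicIco q (ν i) (b i) ⊆ adicIco q (t * k i) (a i))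
    (hmin : ∀ B', IsCanonicalBox q t d B' →
      univ.pi (fun i => adicIco q (ν i) (b i)) ⊆ B' → canonicalBox q t d k a ⊆ B')
    (i : Fin d) : ν i < t * (k i + 1) := by
  classical
  by_contra! hle
  have hq0 : q ≠ 0 := by omega
  set Q := q ^ (ν i - t * (k i + 1))
  let k' := Function.update k i (k i + 1)
  let a' := Function.update a i (b i / Q)
  have hcan : IsCanonicalBox q t d (canonicalBox q t d k' a') := by
    refine ⟨k', a', fun j => ?_, rfl⟩
    rcases eq_or_ne j i with rfl | hji
    · have : q ^ ν j = q ^ (t * (k j + 1)) * Q := by rw [← pow_add, Nat.add_sub_cancel' hle]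
      simpa [k', a', Nat.div_lt_iff_lt_mul (by positivity : 0 < Q), ← this] using hb j
    · simpa [k', a', hji] using ha j
  have hrefine : univ.pi (fun j => adicIco q (ν j) (b j)) ⊆ canonicalBox q t d k' a' := by
    refine (univ_pi_adicIco_subset_iff hq0).2 fun j => ?_
    rcases eq_or_ne j i with rfl | hji
    · simpa [k', a'] using (adicIco_subset_adicIco_iff hq).2 ⟨hle, rfl⟩
    · simpa [k', a', hji] using hsub j
  have hcoord := (univ_pi_adicIco_subset_iff hq0).1 (hmin _ hcan hrefine) i
  simp only [k', a', Function.update_self] at hcoord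
  have hcontra := ((adicIco_subset_adicIco_iff hq).1 hcoord).1
  rw [mul_add_one] at hcontra
  omega

theorem IsGoodPair.exists_refinement (hq : 1 < q) (ht : 0 < t)
    (ha : ∀ i, a i + 1 ≤ q ^ (t * k i)) (hgood : IsGoodPair q t d n (canonicalBox q t d k a) β) :
    ∃ c b : Fin d → ℕ, (∀ i, c i < t) ∧ (∀ i, b i < q ^ c i) ∧ ∑ i, (t * k i + c i) = n ∧
      β = univ.pi fun i => adicIco q (t * k i + c i) (a i * q ^ c i + b i) := by
  obtain ⟨⟨ν, b, hb, hν, rfl⟩, -, hsub, hmin⟩ := hgood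
  have hsub' := (univ_pi_adicIco_subset_iff (by omega)).1 hsub
  have hnest := fun i => (adicIco_subset_adicIco_iff hq).1 (hsub' i)
  have hlt := lt_mul_add_one_of_minimal hq ht ha (fun i => hb i) hsub' hmin
  refine ⟨fun i => ν i - t * k i, fun i => b i % q ^ (ν i - t * k i), fun i => ?_,
    fun i => Nat.mod_lt _ (by positivity), ?_, ?_⟩
  · have hlt_i := hlt i
    rw [mul_add_one] at hlt_i
    show ν i - t * k i < t
    omega
  · rw [← hν]
    exact sum_congr rfl fun i _ => Nat.add_sub_cancel' (hnest i).1
  · refine congrArg _ (funext fun i => ?_)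
    rw [Nat.add_sub_cancel' (hnest i).1, ← (hnest i).2, Nat.div_add_mod']
    rfl

end GoodPair

section Main

variable {q d t : ℕ} [Fact q.Prime] {p : Fin d → (ZMod q)[X]} {k : Fin d → ℕ}

theorem ncard_inter_setOf_digitValue_modByMonic_eq {p E : (ZMod q)[X]} (hp : p.Monic)
    (hpt : p.natDegree = t) (hpE : IsCoprime p E) (α : (ZMod q)[X]) {c s : ℕ} (hct : c ≤ t)
    (hs : s < q ^ c) :
    ({f : (ZMod q)[X] | f.degree < ↑t} ∩
      {f | digitValue q c (fun m => (((α + f * E) %ₘ p).coeff m).val) = s}).ncard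
      = q ^ (t - c) := by
  have := (bijOn_add_mul_modByMonic hp hpE α).ncard_inter_preimage
    {f | digitValue q c (fun m => (f.coeff m).val) = s}
  rw [hpt] at this
  exact this.trans (ncard_setOf_degree_lt_digitValue_coeff_eq hct hs)

theorem rmap_add_mul_mem_iff (hm : ∀ i, (p i).Monic) (hdeg : ∀ i, (p i).natDegree = t)
    (ht : 0 < t) {A : (ZMod q)[X]} {a c : Fin d → ℕ} (hA : rmap q t d p A ∈ canonicalBox q t d k a)
    (hct : ∀ i, c i ≤ t) (b : Fin d → ℕ) (g : (ZMod q)[X]) :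
    rmap q t d p (A + g * ∏ i, p i ^ k i)
        ∈ univ.pi (fun i => adicIco q (t * k i + c i) (a i * q ^ c i + b i))
      ↔ ∀ i, digitValue q (c i) (fun m => (((A /ₘ p i ^ k i
          + g %ₘ p i * ∏ j ∈ univ.erase i, p j ^ k j) %ₘ p i).coeff m).val) = b i := by
  refine forall_congr' fun i => imp_iff_right (Set.mem_univ i) |>.trans ?_
  rw [rmap, ← mul_prod_erase univ _ (mem_univ i), mul_left_comm,
    rp_add_pow_mul_mem_adicIco_iff (hm i) (hdeg i) ht (hA i (Set.mem_univ i)) (hct i)]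
  refine Eq.congr_left (congrArg _ (funext fun m => ?_))
  rw [modByMonic_eq_of_dvd_sub (hm i) ⟨g /ₘ p i * ∏ j ∈ univ.erase i, p j ^ k j, ?_⟩]
  linear_combination (-∏ j ∈ univ.erase i, p j ^ k j) * modByMonic_add_div g (p i)

theorem ncard_setOf_degree_lt_rmap_mem (hm : ∀ i, (p i).Monic) (hdeg : ∀ i, (p i).natDegree = t)
    (hcop : Pairwise fun i j => IsCoprime (p i) (p j)) (ht : 0 < t) {A : (ZMod q)[X]}
    {a c b : Fin d → ℕ} (hA : rmap q t d p A ∈ canonicalBox q t d k a) (hct : ∀ i, c i ≤ t)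
    (hb : ∀ i, b i < q ^ c i) {M : ℕ} (hM : d * t ≤ M) :
    {g : (ZMod q)[X] | g.degree < ↑M ∧ rmap q t d p (A + g * ∏ i, p i ^ k i)
        ∈ univ.pi (fun i => adicIco q (t * k i + c i) (a i * q ^ c i + b i))}.ncard
      = q ^ (M - ∑ i, c i) := by
  have hcofactor : ∀ i, IsCoprime (p i) (∏ j ∈ univ.erase i, p j ^ k j) := fun i =>
    IsCoprime.prod_right fun j hj => (hcop (ne_of_mem_erase hj).symm).pow_right
  have hcount := ncard_setOf_degree_lt_modByMonic_mem hm hdeg hcop hM fun i =>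
    {f | digitValue q (c i) (fun m => (((A /ₘ p i ^ k i
      + f * ∏ j ∈ univ.erase i, p j ^ k j) %ₘ p i).coeff m).val) = b i}
  rw [prod_congr rfl fun i _ => ncard_inter_setOf_digitValue_modByMonic_eq (hm i) (hdeg i)
    (hcofactor i) _ (hct i) (hb i), Nat.card_zmod, prod_pow_eq_pow_sum, ← pow_add] at hcount
  rw [Set.ext fun g => and_congr_right fun _ => rmap_add_mul_mem_iff hm hdeg ht hA hct b g]
  refine hcount.trans (congrArg _ ?_)
  have : ∑ i, (t - c i) + ∑ i, c i = d * t := by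
    rw [← sum_add_distrib, sum_congr rfl fun i _ => Nat.sub_add_cancel (hct i)]
    simp
  omega

end Main

theorem stmt14_general (q d t n : ℕ) [Fact q.Prime] (hd : 2 ≤ d)
    (hnt : 3 * d * t ≤ n)
    (p : Fin d → Polynomial (ZMod q))
    (hmonic : ∀ i, (p i).Monic) (hirr : ∀ i, Irreducible (p i))
    (hdeg : ∀ i, (p i).natDegree = t) (hinj : Function.Injective p)
    (k a : Fin d → ℕ) (ha : ∀ i, a i + 1 ≤ q ^ (t * k i))
    (β : Set (Fin d → ℝ))
    (hgood : IsGoodPair q t d n (canonicalBox q t d k a) β)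
    (A : Polynomial (ZMod q))
    (hA : A.degree < ((t * ∑ i, k i : ℕ) : WithBot ℕ))
    (hAB : rmap q t d p A ∈ canonicalBox q t d k a)
    (L : Set (Polynomial (ZMod q)))
    (hL : L = {g : Polynomial (ZMod q) |
      rmap q t d p (A + g * ∏ i, p i ^ k i) ∈ β}) :
    ({u : Polynomial (ZMod q) | ∃ g ∈ L,
        u = eraseLow q (n - d * t) A
              + g * eraseLow q (n - 3 * d * t + 1) (∏ i, p i ^ k i)}
      ∩ {u : Polynomial (ZMod q) | u.degree < ((n + d * t : ℕ) : WithBot ℕ)}).ncard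
      = q ^ (d * t) := by
  have ht : 0 < t := hdeg ⟨0, by omega⟩ ▸ (hirr _).natDegree_pos
  obtain ⟨c, b, hct, hb, hn, rfl⟩ := hgood.exists_refinement (Fact.out : q.Prime).one_lt ht ha
  have hD : (∏ i, p i ^ k i).Monic := monic_prod_of_monic _ _ fun i _ => (hmonic i).pow _
  have hDdeg : (∏ i, p i ^ k i).natDegree = t * ∑ i, k i := by
    simp [natDegree_prod_of_monic _ _ fun i _ => (hmonic i).pow _, hdeg, mul_sum, mul_comm]
  have hc : ∑ i, c i ≤ d * t := (sum_le_sum fun i _ => (hct i).le).trans (by simp)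
  rw [sum_add_distrib, ← mul_sum] at hn
  have hdt : 0 < d * t := Nat.mul_pos (by omega) ht
  have h3dt : 3 * d * t = 3 * (d * t) := by ring
  rw [ncard_setOf_add_mul_inter_degree_lt ((degree_eraseLow_le _ A).trans_lt hA)
    (hDdeg ▸ hD.degree_eraseLow (by omega)) (by omega), hL]
  exact (ncard_setOf_degree_lt_rmap_mem hmonic hdeg
    (pairwise_isCoprime_of_irreducible hmonic hirr hinj) ht hAB (fun i => (hct i).le) hb
    (by omega)).trans (congrArg _ (by omega))

/-- Claim 4: for a good pair `(B, β)` with type `T = (Ā, D̄)` and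
`L = L_B(β)`, the set `Ȳ_T(L) = {Ā + g·D̄ : g ∈ L} ∩ P_{<n+dt}` has size exactly `q^(dt)`. -/
theorem stmt14 (q d t n : ℕ) [Fact q.Prime] (hd : 2 ≤ d) (hn : 0 < n)
    (ht : t = ⌈2 * Real.log d / Real.log q + 2⌉₊)
    (hnt : 3 * d * t ≤ n)
    (p : Fin d → Polynomial (ZMod q))
    (hmonic : ∀ i, (p i).Monic) (hirr : ∀ i, Irreducible (p i))
    (hdeg : ∀ i, (p i).natDegree = t) (hinj : Function.Injective p)
    (k a : Fin d → ℕ) (ha : ∀ i, a i + 1 ≤ q ^ (t * k i))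
    (β : Set (Fin d → ℝ))
    (hgood : IsGoodPair q t d n (canonicalBox q t d k a) β)
    (A : Polynomial (ZMod q))
    (hA : A.degree < ((t * ∑ i, k i : ℕ) : WithBot ℕ))
    (hAB : rmap q t d p A ∈ canonicalBox q t d k a)
    (L : Set (Polynomial (ZMod q)))
    (hL : L = {g : Polynomial (ZMod q) |
      rmap q t d p (A + g * ∏ i, p i ^ k i) ∈ β}) :
    ({u : Polynomial (ZMod q) | ∃ g ∈ L,
        u = eraseLow q (n - d * t) A
              + g * eraseLow q (n - 3 * d * t + 1) (∏ i, p i ^ k i)}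
      ∩ {u : Polynomial (ZMod q) | u.degree < ((n + d * t : ℕ) : WithBot ℕ)}).ncard
      = q ^ (d * t) :=
  stmt14_general q d t n hd hnt p hmonic hirr hdeg hinj k a ha β hgood A hA hAB L hL
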